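/- arXiv:1206.4982 — 2 statements merged into one kernel-verified Lean document; each statement's English description precedes it below -/
import Mathlib

section
/- For any matrix ξ in sl(2, ℝ) with two distinct real eigenvalues −c and c (c > 0), the convex hull of the adjoint orbit {g ξ g⁻¹ : g ∈ SL(2, ℝ)} is all of sl(2, ℝ). -/
/-!
Conjugation preserves the trace, so the hull lies in `sl(2, ℝ)`. Conversely, a trace-zero
`2 × 2` matrix with determinant `-c² ≠ 0` has eigenvalues `±c`, and a basis of eigenvectors
with one vector rescaled to determinant `1` conjugates it to `diag(c, -c)` inside `SL(2, ℝ)`;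
hence the orbit is the whole level set `{det = -c²}` of `sl(2, ℝ)`. On `sl(2, ℝ)` the quadratic
form `det` is indefinite. Through any `A ∈ sl(2, ℝ)` take a line along which `det` tends to
the side of `-c²` opposite to `det A`: restricted to it, `det + c²` is a quadratic with roots
on both sides of `A`, which puts `A` on a segment between two points of the orbit.
-/

open Polynomial

theorem exists_quadratic_roots_nonpos_nonneg {a b c : ℝ} (ha : 0 < a) (hc : c ≤ 0) :
    ∃ s₁ s₂ : ℝ, s₁ ≤ 0 ∧ 0 ≤ s₂ ∧
      a * (s₁ * s₁) + b * s₁ + c = 0 ∧ a * (s₂ * s₂) + b * s₂ + c = 0 := by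
  have hD : b ^ 2 ≤ discrim a b c := by rw [discrim]; nlinarith
  have hs : discrim a b c = √(discrim a b c) * √(discrim a b c) :=
    (Real.mul_self_sqrt ((sq_nonneg b).trans hD)).symm
  have hb : |b| ≤ √(discrim a b c) := Real.abs_le_sqrt hD
  have h2a : 0 < 2 * a := by positivity
  refine ⟨(-b - √(discrim a b c)) / (2 * a), (-b + √(discrim a b c)) / (2 * a), ?_, ?_,
    (quadratic_eq_zero_iff ha.ne' hs _).2 (Or.inr rfl),
    (quadratic_eq_zero_iff ha.ne' hs _).2 (Or.inl rfl)⟩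
  · exact div_nonpos_of_nonpos_of_nonneg (by linarith [neg_abs_le b]) h2a.le
  · exact div_nonneg (by linarith [le_abs_self b]) h2a.le

theorem mem_segment_add_smul_of_nonpos_of_nonneg {E : Type*} [AddCommGroup E] [Module ℝ E]
    (x u : E) {s₁ s₂ : ℝ} (h₁ : s₁ ≤ 0) (h₂ : 0 ≤ s₂) :
    x ∈ segment ℝ (x + s₁ • u) (x + s₂ • u) := by
  have h0 : (0 : ℝ) ∈ segment ℝ s₁ s₂ := by
    rw [segment_eq_Icc (h₁.trans h₂)]; exact ⟨h₁, h₂⟩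
  have h0u : (0 : E) ∈ segment ℝ (s₁ • u) (s₂ • u) := by
    have := image_segment ℝ (LinearMap.toSpanSingleton ℝ E u).toAffineMap s₁ s₂
    simp only [LinearMap.coe_toAffineMap, LinearMap.toSpanSingleton_apply] at this
    exact this ▸ ⟨0, h0, zero_smul ℝ u⟩
  simpa using (mem_segment_translate ℝ x).2 h0u

namespace QuadraticMap

variable {V : Type*} [AddCommGroup V] [Module ℝ V] (Q : QuadraticMap ℝ V ℝ)

theorem map_add_smul (x u : V) (s : ℝ) :
    Q (x + s • u) = Q u * (s * s) + polar Q x u * s + Q x := by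
  rw [QuadraticMap.map_add Q, QuadraticMap.map_smul, polar_smul_right, smul_eq_mul, smul_eq_mul]
  ring

theorem exists_mem_segment_of_le {u : V} (hu : 0 < Q u) {x : V} {r : ℝ} (hx : Q x ≤ r) :
    ∃ s₁ s₂ : ℝ, Q (x + s₁ • u) = r ∧ Q (x + s₂ • u) = r ∧
      x ∈ segment ℝ (x + s₁ • u) (x + s₂ • u) := by
  obtain ⟨s₁, s₂, h₁, h₂, hs₁, hs₂⟩ :=
    exists_quadratic_roots_nonpos_nonneg (b := polar Q x u) hu (sub_nonpos.2 hx)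
  refine ⟨s₁, s₂, ?_, ?_, mem_segment_add_smul_of_nonpos_of_nonneg x u h₁ h₂⟩ <;>
    rw [map_add_smul] <;> linarith

theorem submodule_subset_convexHull_inter_level (W : Submodule ℝ V) {u v : V} (hu : u ∈ W)
    (hv : v ∈ W) (hQu : 0 < Q u) (hQv : Q v < 0) (r : ℝ) :
    (W : Set V) ⊆ convexHull ℝ ((W : Set V) ∩ {x | Q x = r}) := by
  intro x hx
  have hline : ∀ {w}, w ∈ W → ∀ s : ℝ, x + s • w ∈ W :=
    fun hw s ↦ W.add_mem hx (W.smul_mem s hw)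
  rcases le_total (Q x) r with hle | hge
  · obtain ⟨s₁, s₂, hs₁, hs₂, hseg⟩ := Q.exists_mem_segment_of_le hQu hle
    exact segment_subset_convexHull (s := (W : Set V) ∩ {x | Q x = r})
      ⟨hline hu s₁, hs₁⟩ ⟨hline hu s₂, hs₂⟩ hseg
  · obtain ⟨s₁, s₂, hs₁, hs₂, hseg⟩ :=
      (-Q).exists_mem_segment_of_le (neg_pos.2 hQv) (neg_le_neg hge)
    exact segment_subset_convexHull (s := (W : Set V) ∩ {x | Q x = r})
      ⟨hline hv s₁, neg_inj.1 hs₁⟩ ⟨hline hv s₂, neg_inj.1 hs₂⟩ hseg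

end QuadraticMap

namespace Matrix

section detQuadraticMap

variable (R : Type*) [CommRing R]

def detQuadraticMap : QuadraticMap R (Matrix (Fin 2) (Fin 2) R) R :=
  .linMulLin (entryLinearMap R R 0 0) (entryLinearMap R R 1 1) -
    .linMulLin (entryLinearMap R R 0 1) (entryLinearMap R R 1 0)

@[simp]
theorem detQuadraticMap_apply (A : Matrix (Fin 2) (Fin 2) R) : detQuadraticMap R A = A.det := by
  simp [detQuadraticMap, det_fin_two]

end detQuadraticMap

section adjointOrbit

variable {n R : Type*} [Fintype n] [DecidableEq n] [CommRing R]

def adjointOrbit (ξ : Matrix n n R) : Set (Matrix n n R) :=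
  {A | ∃ g : SpecialLinearGroup n R,
    A = (g : Matrix n n R) * ξ * ((g⁻¹ : SpecialLinearGroup n R) : Matrix n n R)}

theorem trace_eq_of_mem_adjointOrbit {ξ A : Matrix n n R} (hA : A ∈ adjointOrbit ξ) :
    A.trace = ξ.trace := by
  obtain ⟨g, rfl⟩ := hA
  exact trace_units_conj (SpecialLinearGroup.toGL g) ξ

theorem mem_adjointOrbit_of_mul_eq_mul {ξ A : Matrix n n R} (g : SpecialLinearGroup n R)
    (h : A * g = g * ξ) : A ∈ adjointOrbit ξ :=
  ⟨g, by rw [← h, mul_assoc, ← SpecialLinearGroup.coe_mul, mul_inv_cancel,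
    SpecialLinearGroup.coe_one, mul_one]⟩

theorem mem_adjointOrbit_of_mem_of_mem {D ξ A : Matrix n n R} (hA : A ∈ adjointOrbit D)
    (hξ : ξ ∈ adjointOrbit D) : A ∈ adjointOrbit ξ := by
  obtain ⟨g, rfl⟩ := hA
  obtain ⟨h, rfl⟩ := hξ
  have cancel (k : SpecialLinearGroup n R) (M : Matrix n n R) :
      ((k⁻¹ : SpecialLinearGroup n R) : Matrix n n R) * (k * M) = M := by
    rw [← mul_assoc, ← SpecialLinearGroup.coe_mul, inv_mul_cancel, SpecialLinearGroup.coe_one,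
      one_mul]
  refine mem_adjointOrbit_of_mul_eq_mul (g * h⁻¹) ?_
  simp only [SpecialLinearGroup.coe_mul, mul_assoc, cancel]

end adjointOrbit

theorem exists_specialLinearGroup_mul_eq_mul_diagonal {n K : Type*} [Fintype n] [DecidableEq n]
    [Nonempty n] [Field K] {A P : Matrix n n K} (hP : P.det ≠ 0) {d : n → K}
    (h : A * P = P * diagonal d) :
    ∃ g : SpecialLinearGroup n K, A * g = g * diagonal d := by
  let s : n → K := Pi.mulSingle (Classical.arbitrary n) P.det⁻¹
  have hs : (P * diagonal s).det = 1 := by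
    rw [det_mul, det_diagonal, Finset.prod_pi_mulSingle', if_pos (Finset.mem_univ _),
      mul_inv_cancel₀ hP]
  refine ⟨⟨P * diagonal s, hs⟩, ?_⟩
  rw [← mul_assoc, h, mul_assoc, mul_assoc, diagonal_mul_diagonal, diagonal_mul_diagonal]
  simp only [mul_comm]

variable {K : Type*} [Field K] [NeZero (2 : K)]

theorem exists_mul_eq_mul_diagonal_of_trace_eq_zero {B : Matrix (Fin 2) (Fin 2) K}
    (htr : B.trace = 0) {e : K} (he : e ≠ 0) (hdet : B.det = -e ^ 2) :
    ∃ P : Matrix (Fin 2) (Fin 2) K, P.det ≠ 0 ∧ B * P = P * diagonal ![e, -e] := by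
  have h11 : B 1 1 = -B 0 0 := by rw [trace_fin_two] at htr; linear_combination htr
  obtain ⟨a, b, d, rfl⟩ : ∃ a b d, B = !![a, b; d, -a] := ⟨_, _, _, h11 ▸ eta_fin_two B⟩
  rw [det_fin_two_of] at hdet
  rw [diagonal_vec2]
  -- The columns of `P` are eigenvectors for `e` and `-e`; the first choice degenerates at
  -- `a = -e`, the second at `a = e`.
  have h2e : 2 * e ≠ 0 := mul_ne_zero two_ne_zero he
  by_cases ha : e + a = 0
  · refine ⟨!![b, e - a; e - a, -d], ?_, ?_⟩
    · rw [det_fin_two_of, show b * -d - (e - a) * (e - a) = -(2 * e) * (2 * e) by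
        linear_combination hdet + 2 * e * ha]
      exact mul_ne_zero (neg_ne_zero.2 h2e) h2e
    · ext i j
      fin_cases i <;> fin_cases j <;> simp <;> grind
  · refine ⟨!![e + a, -b; d, e + a], ?_, ?_⟩
    · rw [det_fin_two_of, show (e + a) * (e + a) - -b * d = 2 * e * (e + a) by
        linear_combination -hdet]
      exact mul_ne_zero h2e ha
    · ext i j
      fin_cases i <;> fin_cases j <;> simp <;> grind

theorem mem_adjointOrbit_diagonal_of_trace_eq_zero {B : Matrix (Fin 2) (Fin 2) K}
    (htr : B.trace = 0) {e : K} (he : e ≠ 0) (hdet : B.det = -e ^ 2) :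
    B ∈ adjointOrbit (diagonal ![e, -e]) := by
  obtain ⟨P, hP, hBP⟩ := exists_mul_eq_mul_diagonal_of_trace_eq_zero htr he hdet
  obtain ⟨g, hg⟩ := exists_specialLinearGroup_mul_eq_mul_diagonal hP hBP
  exact mem_adjointOrbit_of_mul_eq_mul g hg

theorem mem_adjointOrbit_of_trace_eq_zero {ξ A : Matrix (Fin 2) (Fin 2) K} (hξ : ξ.trace = 0)
    {e : K} (he : e ≠ 0) (hξdet : ξ.det = -e ^ 2) (hA : A.trace = 0) (hAdet : A.det = ξ.det) :
    A ∈ adjointOrbit ξ :=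
  mem_adjointOrbit_of_mem_of_mem
    (mem_adjointOrbit_diagonal_of_trace_eq_zero hA he (hAdet.trans hξdet))
    (mem_adjointOrbit_diagonal_of_trace_eq_zero hξ he hξdet)

end Matrix

/-- For any `ξ ∈ sl(2, ℝ)` with two distinct real eigenvalues `−c` and `c` (`c > 0`),
i.e. with characteristic polynomial `X² − c²`, the convex hull of the adjoint orbit
`{g ξ g⁻¹ : g ∈ SL(2, ℝ)}` is all of `sl(2, ℝ)`. -/
theorem stmt_4 (c : ℝ) (hc : 0 < c) (ξ : Matrix (Fin 2) (Fin 2) ℝ)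
    (hξ : ξ.trace = 0) (hchar : ξ.charpoly = X ^ 2 - C (c ^ 2)) :
    convexHull ℝ {A : Matrix (Fin 2) (Fin 2) ℝ |
        ∃ g : Matrix.SpecialLinearGroup (Fin 2) ℝ,
          A = (g : Matrix (Fin 2) (Fin 2) ℝ) * ξ *
            ((g⁻¹ : Matrix.SpecialLinearGroup (Fin 2) ℝ) : Matrix (Fin 2) (Fin 2) ℝ)}
      = {A : Matrix (Fin 2) (Fin 2) ℝ | A.trace = 0} := by
  have hdet : ξ.det = -c ^ 2 := by
    simpa [-map_pow] using congrArg (coeff · 0) (ξ.charpoly_fin_two.symm.trans hchar)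
  let sl2 := LinearMap.ker (Matrix.traceLinearMap (Fin 2) ℝ ℝ)
  change convexHull ℝ (Matrix.adjointOrbit ξ) = (sl2 : Set (Matrix (Fin 2) (Fin 2) ℝ))
  refine subset_antisymm (convexHull_min
    (fun A hA ↦ (Matrix.trace_eq_of_mem_adjointOrbit hA).trans hξ) sl2.convex) ?_
  calc (sl2 : Set (Matrix (Fin 2) (Fin 2) ℝ))
      ⊆ convexHull ℝ (sl2 ∩ {A | Matrix.detQuadraticMap ℝ A = ξ.det}) :=
        (Matrix.detQuadraticMap ℝ).submodule_subset_convexHull_inter_level sl2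
          (u := !![0, 1; -1, 0]) (v := !![1, 0; 0, -1])
          (by simp [sl2]) (by simp [sl2]) (by simp) (by simp) _
    _ ⊆ convexHull ℝ (Matrix.adjointOrbit ξ) := convexHull_mono fun A ⟨hA, hAdet⟩ ↦
        Matrix.mem_adjointOrbit_of_trace_eq_zero hξ hc.ne' hdet hA (by simpa using hAdet)
end

section
/- For n ≥ 4, the matrix ζ = a(−E_{11} − E_{22} + E_{(n−1)(n−1)} + E_{nn}) + E_{1n} + E_{2(n−1)} has characteristic polynomial (−λ)^{n−4}(λ² − a²)² for any real a. In particular, ζ is nilpotent if and only if a = 0. -/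
/-!
The matrix is upper triangular with diagonal `(-a, -a, 0, …, 0, a, a)`, so its characteristic
polynomial is `∏ (X - ζᵢᵢ) = X^(n-4) (X + a)² (X - a)²`. Over a reduced ring a matrix is
nilpotent iff its characteristic polynomial is `X^n`, and evaluating
`X^(n-4) (X² - a²)² = X^n` at `a` gives `a^n = 0`.
-/

open Polynomial Matrix

theorem Matrix.BlockTriangular.smul {α m R S : Type*} [LT α] [Zero R] [SMulZeroClass S R]
    {M : Matrix m m R} {b : m → α} (h : M.BlockTriangular b) (c : S) :
    (c • M).BlockTriangular b :=
  fun _ _ hij => by rw [smul_apply, h hij, smul_zero]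

theorem Matrix.isNilpotent_iff_charpoly_eq_X_pow {n R : Type*} [Fintype n] [DecidableEq n]
    [CommRing R] [IsReduced R] (M : Matrix n n R) :
    IsNilpotent M ↔ M.charpoly = X ^ Fintype.card n :=
  ⟨fun h => sub_eq_zero.mp <| Polynomial.ext fun i =>
      (Polynomial.isNilpotent_iff.mp (isNilpotent_charpoly_sub_pow_of_isNilpotent h) i).eq_zero,
    fun h => ⟨Fintype.card n, by rw [← aeval_X_pow (R := R), ← h, aeval_self_charpoly]⟩⟩

theorem Polynomial.X_pow_sub_four_mul_eq_X_pow_iff {R : Type*} [CommRing R] [IsReduced R]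
    {n : ℕ} (hn : 4 ≤ n) (a : R) :
    X ^ (n - 4) * (X ^ 2 - C (a ^ 2)) ^ 2 = X ^ n ↔ a = 0 := by
  constructor
  · intro h
    have heval := congrArg (eval a) h
    simp only [eval_mul, eval_pow, eval_sub, eval_X, eval_C, sub_self] at heval
    exact IsReduced.eq_zero a ⟨n, by rw [← heval]; ring⟩
  · rintro rfl
    rw [zero_pow two_ne_zero, C_0, sub_zero, ← pow_mul, ← pow_add, Nat.sub_add_cancel hn]

theorem Finset.prod_X_sub_C_eq_X_pow_mul_prod {ι R : Type*} [Fintype ι] [DecidableEq ι]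
    [CommRing R] (d : ι → R) {s : Finset ι} (hd : ∀ i ∉ s, d i = 0) :
    ∏ i, (X - C (d i)) = X ^ (Fintype.card ι - s.card) * ∏ i ∈ s, (X - C (d i)) := by
  rw [← Finset.prod_compl_mul_prod s, ← Finset.card_compl, ← Finset.prod_const]
  congr 1
  exact Finset.prod_congr rfl fun i hi => by rw [hd i (Finset.mem_compl.mp hi), C_0, sub_zero]

theorem Matrix.charpoly_smul_add_single_add_single {ι R : Type*} [Fintype ι] [LinearOrder ι]
    [CommRing R] (a : R)
    {i₁ i₂ j₁ j₂ : ι} (hi : i₁ ≠ i₂) (hj : j₁ ≠ j₂) (hij : max i₁ i₂ < min j₁ j₂) :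
    (a • (-single i₁ i₁ 1 - single i₂ i₂ 1 + single j₁ j₁ 1 + single j₂ j₂ 1)
      + single i₁ j₂ 1 + single i₂ j₁ 1 : Matrix ι ι R).charpoly
      = X ^ (Fintype.card ι - 4) * (X ^ 2 - C (a ^ 2)) ^ 2 := by
  obtain ⟨⟨h₁₁, h₂₁⟩, h₁₂, h₂₂⟩ : (i₁ < j₁ ∧ i₂ < j₁) ∧ i₁ < j₂ ∧ i₂ < j₂ := by
    simpa only [max_lt_iff, lt_min_iff] using hij
  have hdiag (i : ι) := blockTriangular_single (b := id) (le_refl i) (1 : R)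
  have hupper : IsUpperTriangular (a • (-single i₁ i₁ 1 - single i₂ i₂ 1 + single j₁ j₁ 1
      + single j₂ j₂ 1) + single i₁ j₂ 1 + single i₂ j₁ 1 : Matrix ι ι R) :=
    ((((hdiag i₁).neg.sub (hdiag i₂)).add (hdiag j₁) |>.add (hdiag j₂) |>.smul a).add
      (blockTriangular_single h₁₂.le 1)).add (blockTriangular_single h₂₁.le 1)
  rw [charpoly_of_isUpperTriangular _ hupper,
    Finset.prod_X_sub_C_eq_X_pow_mul_prod _ (s := {i₁, i₂, j₁, j₂})]
  · have hcard : ({i₁, i₂, j₁, j₂} : Finset ι).card = 4 := by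
      rw [Finset.card_insert_of_notMem, Finset.card_insert_of_notMem, Finset.card_pair hj]
      all_goals simp [hi, h₁₁.ne, h₁₂.ne, h₂₁.ne, h₂₂.ne]
    rw [hcard, Finset.prod_insert, Finset.prod_insert, Finset.prod_pair hj]
    all_goals simp [hi, hj, hi.symm, hj.symm, h₁₁.ne, h₁₂.ne, h₂₁.ne, h₂₂.ne,
      h₁₁.ne', h₁₂.ne', h₂₁.ne', h₂₂.ne']
    ring
  · intro i hi
    simp only [Finset.mem_insert, Finset.mem_singleton, not_or] at hi
    obtain ⟨hi₁, hi₂, hj₁, hj₂⟩ := hi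
    simp [Ne.symm hi₁, Ne.symm hi₂, Ne.symm hj₁, Ne.symm hj₂]

/-- For `n ≥ 4`, the matrix `ζ = a(−E₁₁ − E₂₂ + E₍ₙ₋₁₎₍ₙ₋₁₎ + Eₙₙ) + E₁ₙ + E₂₍ₙ₋₁₎` has
characteristic polynomial `(−λ)^(n−4)(λ² − a²)²`, i.e. `charpoly ζ = X^(n-4)(X² − a²)²`;
in particular `ζ` is nilpotent if and only if `a = 0`. -/
theorem stmt_12 (n : ℕ) (hn : 4 ≤ n) (a : ℝ)
    (ζ : Matrix (Fin n) (Fin n) ℝ)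
    (hζ : ζ = a • (-(Matrix.single ⟨0, by omega⟩ ⟨0, by omega⟩ (1 : ℝ))
        - Matrix.single ⟨1, by omega⟩ ⟨1, by omega⟩ 1
        + Matrix.single ⟨n - 2, by omega⟩ ⟨n - 2, by omega⟩ 1
        + Matrix.single ⟨n - 1, by omega⟩ ⟨n - 1, by omega⟩ 1)
      + Matrix.single ⟨0, by omega⟩ ⟨n - 1, by omega⟩ 1
      + Matrix.single ⟨1, by omega⟩ ⟨n - 2, by omega⟩ 1) :
    ζ.charpoly = Polynomial.X ^ (n - 4) * (Polynomial.X ^ 2 - Polynomial.C (a ^ 2)) ^ 2 ∧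
    (IsNilpotent ζ ↔ a = 0) := by
  have hcharpoly : ζ.charpoly = X ^ (n - 4) * (X ^ 2 - C (a ^ 2)) ^ 2 := by
    rw [hζ, charpoly_smul_add_single_add_single, Fintype.card_fin]
    all_goals simp [Fin.ext_iff, Fin.lt_def]
    all_goals omega
  refine ⟨hcharpoly, ?_⟩
  rw [isNilpotent_iff_charpoly_eq_X_pow, hcharpoly, Fintype.card_fin,
    X_pow_sub_four_mul_eq_X_pow_iff hn]
end
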